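/- For the query language CRPQ[=], some constraints expressible in GFD are not expressible in 1GGD. In particular, the GFD φ = ((x)(y), ∅ ⇒ {x.a = y.a}), asserting that all objects matched to the (disconnected) pattern of two vertex variables agree on the value of property a, is not expressible by any finite set of 1GGDs over CRPQ[=]. -/
import Mathlib


namespace PGC

/-- Objects (vertex/edge identifiers). -/
abbrev Obj := ℕ
/-- Labels. -/
abbrev Lab := ℕ
/-- Property keys. -/
abbrev Key := ℕ
/-- Data values. -/
abbrev Val := ℕ
/-- Variables. -/
abbrev Var := ℕ

/-- A property graph `G = (V, E, η, λ, π)`. -/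
structure PGraph where
  V : Finset Obj
  E : Finset Obj
  disj : Disjoint V E
  src : Obj → Obj
  tgt : Obj → Obj
  lab : Obj → Finset Lab
  prop : Obj → Key → Option Val
  src_mem : ∀ e ∈ E, src e ∈ V
  tgt_mem : ∀ e ∈ E, tgt e ∈ V

/-- A walk (path), given by its start vertex and its list of edges. -/
structure Walk where
  start : Obj
  edges : List Obj
deriving DecidableEq

/-- The list of edges forms a walk in `G` starting at the given vertex. -/
def PGraph.walkFrom (G : PGraph) : Obj → List Obj → Prop
  | u, [] => u ∈ G.V
  | u, e :: es => e ∈ G.E ∧ G.src e = u ∧ G.walkFrom (G.tgt e) es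

/-- The final vertex of a walk. -/
def Walk.endpt (G : PGraph) (w : Walk) : Obj :=
  w.edges.foldl (fun _ e => G.tgt e) w.start

/-- What a variable can be bound to: an object (vertex or edge) or a walk. -/
inductive Target where
  | obj (o : Obj)
  | walk (w : Walk)
deriving DecidableEq

/-- Atoms of conjunctive (regular path) queries. -/
inductive Atom where
  | vertex (x : Var) (ls : List Lab)
  | edge (x e y : Var) (ls : List Lab)
  | path (x p y : Var) (r : RegularExpression Lab)

def Atom.vars : Atom → Finset Var
  | .vertex x _ => {x}
  | .edge x e y _ => {x, e, y}
  | .path x p y _ => {x, p, y}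

def Atom.isPath : Atom → Prop
  | .path _ _ _ _ => True
  | _ => False

/-- A query is a finite conjunction of atoms. -/
abbrev Query := List Atom

/-- Variables of a query. -/
def qvars (Q : Query) : Finset Var := Q.foldr (fun a s => a.vars ∪ s) ∅

/-- Satisfaction of an atom by an assignment `h` in a property graph. -/
def Atom.sat (G : PGraph) (h : Var → Target) : Atom → Prop
  | .vertex x ls => ∃ o, h x = .obj o ∧ o ∈ G.V ∧ ∀ l ∈ ls, l ∈ G.lab o
  | .edge x e y ls => ∃ ox oe oy, h x = .obj ox ∧ h e = .obj oe ∧ h y = .obj oy ∧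
      oe ∈ G.E ∧ G.src oe = ox ∧ G.tgt oe = oy ∧ ∀ l ∈ ls, l ∈ G.lab oe
  | .path x p y r => ∃ ox w oy, h x = .obj ox ∧ h p = .walk w ∧ h y = .obj oy ∧
      w.start = ox ∧ G.walkFrom ox w.edges ∧ Walk.endpt G w = oy ∧
      ∃ word : List Lab, word ∈ r.matches' ∧
        List.Forall₂ (fun e l => l ∈ G.lab e) w.edges word

/-- A match of a query `Q` over `G` (all-walk semantics). -/
def Match (G : PGraph) (Q : Query) (h : Var → Target) : Prop :=
  ∀ a ∈ Q, a.sat G h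

/-- The property value `h(x).a`, if defined. -/
def propOf (G : PGraph) (h : Var → Target) (x : Var) (a : Key) : Option Val :=
  match h x with
  | .obj o => G.prop o a
  | .walk _ => none

/-- Data predicates. -/
inductive Pred where
  | propEq (x : Var) (a : Key) (y : Var) (b : Key)   -- x.a = y.b
  | propEqC (x : Var) (a : Key) (c : Val)            -- x.a = c
  | ex (x : Var) (a : Key)                           -- ex(x.a)
  | idEq (x y : Var)                                 -- x = y
  | propNe (x : Var) (a : Key) (y : Var) (b : Key)   -- x.a ≠ y.b
  | propNeC (x : Var) (a : Key) (c : Val)            -- x.a ≠ c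
  | idNe (x y : Var)                                 -- x ≠ y

/-- Satisfaction of a data predicate. -/
def Pred.sat (G : PGraph) (h : Var → Target) : Pred → Prop
  | .propEq x a y b => ∃ v, propOf G h x a = some v ∧ propOf G h y b = some v
  | .propEqC x a c => propOf G h x a = some c
  | .ex x a => (propOf G h x a).isSome
  | .idEq x y => h x = h y
  | .propNe x a y b => ∃ v w, propOf G h x a = some v ∧ propOf G h y b = some w ∧ v ≠ w
  | .propNeC x a c => ∃ v, propOf G h x a = some v ∧ v ≠ c
  | .idNe x y => h x ≠ h y

def Pred.vars : Pred → Finset Var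
  | .propEq x _ y _ => {x, y}
  | .propEqC x _ _ => {x}
  | .ex x _ => {x}
  | .idEq x y => {x, y}
  | .propNe x _ y _ => {x, y}
  | .propNeC x _ _ => {x}
  | .idNe x y => {x, y}

/-- `h ⊨ C`: every predicate of `C` holds under `h`. -/
def satC (G : PGraph) (h : Var → Target) (C : List Pred) : Prop :=
  ∀ p ∈ C, p.sat G h

/-- A predicate uses only equality (no inequality). -/
def Pred.isEq : Pred → Prop
  | .propEq _ _ _ _ => True
  | .propEqC _ _ _ => True
  | .ex _ _ => True
  | .idEq _ _ => True
  | _ => False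

/-- A predicate is an equality with a constant. -/
def Pred.isEqC : Pred → Prop
  | .propEqC _ _ _ => True
  | _ => False

/-- A query language: whether path atoms are allowed, and which data predicates are allowed. -/
structure QLang where
  allowPaths : Bool
  allowPred : Pred → Prop

/-- CQ[=] -/
def CQeq : QLang := ⟨false, Pred.isEq⟩
/-- CQ[=,≠] -/
def CQeqNe : QLang := ⟨false, fun _ => True⟩
/-- CRPQ[=] -/
def CRPQeq : QLang := ⟨true, Pred.isEq⟩
/-- CRPQ[=,≠] -/
def CRPQeqNe : QLang := ⟨true, fun _ => True⟩
/-- CRPQ[=_c] -/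
def CRPQeqC : QLang := ⟨true, Pred.isEqC⟩

/-- The query belongs to the query language. -/
def QueryIn (L : QLang) (Q : Query) : Prop :=
  ∀ a ∈ Q, a.isPath → L.allowPaths = true

/-- All predicates belong to the query language. -/
def PredsIn (L : QLang) (C : List Pred) : Prop :=
  ∀ p ∈ C, L.allowPred p

/-- Graph functional dependency `(Q(x̄,ȳ), C_s(x̄,ȳ) ⇒ C_t(x̄))`. -/
structure GFD where
  shared : List Var
  Q : Query
  Cs : List Pred
  Ct : List Pred

def GFD.wf (L : QLang) (φ : GFD) : Prop :=
  QueryIn L φ.Q ∧ PredsIn L φ.Cs ∧ PredsIn L φ.Ct ∧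
  φ.shared.toFinset ⊆ qvars φ.Q ∧
  (∀ p ∈ φ.Ct, p.vars ⊆ φ.shared.toFinset) ∧
  (∀ p ∈ φ.Cs, p.vars ⊆ qvars φ.Q)

def GFD.sat (φ : GFD) (G : PGraph) : Prop :=
  ∀ h, Match G φ.Q h → satC G h φ.Cs → satC G h φ.Ct

def GFD.allVars (φ : GFD) : Finset Var :=
  qvars φ.Q ∪ φ.shared.toFinset ∪ (φ.Cs ++ φ.Ct).foldr (fun p s => p.vars ∪ s) ∅

/-- Graph generating dependency `(Q_s(x̄,ȳ), C_s(x̄,ȳ) ⇒ Q_t(x̄,z̄), C_t(x̄,z̄))`. -/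
structure GGD where
  shared : List Var
  Qs : Query
  Cs : List Pred
  Qt : Query
  Ct : List Pred

def GGD.wf (L : QLang) (φ : GGD) : Prop :=
  QueryIn L φ.Qs ∧ QueryIn L φ.Qt ∧ PredsIn L φ.Cs ∧ PredsIn L φ.Ct ∧
  φ.shared.toFinset ⊆ qvars φ.Qs ∧
  qvars φ.Qs ∩ qvars φ.Qt ⊆ φ.shared.toFinset ∧
  (∀ p ∈ φ.Cs, p.vars ⊆ qvars φ.Qs) ∧
  (∀ p ∈ φ.Ct, p.vars ⊆ qvars φ.Qt ∪ φ.shared.toFinset)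

def GGD.sat (φ : GGD) (G : PGraph) : Prop :=
  ∀ hs, Match G φ.Qs hs → satC G hs φ.Cs →
    ∃ ht, Match G φ.Qt ht ∧ (∀ v ∈ φ.shared, ht v = hs v) ∧ satC G ht φ.Ct

/-- Assertion keywords of PG-Keys. -/
inductive KW where
  | mandatory
  | exclusive
  | singleton
deriving DecidableEq

/-- Entries of a key expression: a variable or a property reference `v.a`. -/
inductive KeyExpr where
  | var (v : Var)
  | ref (v : Var) (a : Key)

def KeyExpr.vars : KeyExpr → Finset Var
  | .var v => {v}
  | .ref v _ => {v}

/-- Value of a key-expression entry under a match, if defined. -/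
def KeyExpr.eval (G : PGraph) (h : Var → Target) : KeyExpr → Option (Target ⊕ Val)
  | .var v => some (Sum.inl (h v))
  | .ref v a => (propOf G h v a).map Sum.inr

def keysDefined (G : PGraph) (h : Var → Target) (ks : List KeyExpr) : Prop :=
  ∀ k ∈ ks, (KeyExpr.eval G h k).isSome

def keysEq (G : PGraph) (h h' : Var → Target) (ks : List KeyExpr) : Prop :=
  ∀ k ∈ ks, KeyExpr.eval G h k = KeyExpr.eval G h' k

/-- A PG-Key `(Q_s(x,ȳ), C_s ⇒ α(ν̄), Q_t(x,z̄), C_t)`. -/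
structure PGKey where
  x : Var
  Qs : Query
  Cs : List Pred
  kw : KW
  keys : List KeyExpr
  Qt : Query
  Ct : List Pred

def PGKey.wf (L : QLang) (ψ : PGKey) : Prop :=
  QueryIn L ψ.Qs ∧ QueryIn L ψ.Qt ∧ PredsIn L ψ.Cs ∧ PredsIn L ψ.Ct ∧
  ψ.x ∈ qvars ψ.Qs ∧ ψ.x ∈ qvars ψ.Qt ∧
  qvars ψ.Qs ∩ qvars ψ.Qt = {ψ.x} ∧
  (∀ p ∈ ψ.Cs, p.vars ⊆ qvars ψ.Qs) ∧
  (∀ p ∈ ψ.Ct, p.vars ⊆ qvars ψ.Qt) ∧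
  (∀ k ∈ ψ.keys, k.vars ⊆ qvars ψ.Qt)

def PGKey.sat (ψ : PGKey) (G : PGraph) : Prop :=
  match ψ.kw with
  | .mandatory =>
      ∀ hs, Match G ψ.Qs hs → satC G hs ψ.Cs →
        ∃ ht, Match G ψ.Qt ht ∧ ht ψ.x = hs ψ.x ∧ satC G ht ψ.Ct ∧
          keysDefined G ht ψ.keys
  | .singleton =>
      ∀ hs, Match G ψ.Qs hs → satC G hs ψ.Cs →
        ∀ ht ht', Match G ψ.Qt ht → satC G ht ψ.Ct → ht ψ.x = hs ψ.x →
          Match G ψ.Qt ht' → satC G ht' ψ.Ct → ht' ψ.x = hs ψ.x →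
          keysDefined G ht ψ.keys → keysDefined G ht' ψ.keys →
          keysEq G ht ht' ψ.keys
  | .exclusive =>
      ∀ hs hs', Match G ψ.Qs hs → satC G hs ψ.Cs →
        Match G ψ.Qs hs' → satC G hs' ψ.Cs →
        ∀ ht ht', Match G ψ.Qt ht → satC G ht ψ.Ct → ht ψ.x = hs ψ.x →
          Match G ψ.Qt ht' → satC G ht' ψ.Ct → ht' ψ.x = hs' ψ.x →
          keysDefined G ht ψ.keys → keysDefined G ht' ψ.keys →
          keysEq G ht ht' ψ.keys →
          hs ψ.x = hs' ψ.x

def PGKey.allVars (ψ : PGKey) : Finset Var :=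
  qvars ψ.Qs ∪ qvars ψ.Qt ∪
  (ψ.Cs ++ ψ.Ct).foldr (fun p s => p.vars ∪ s) ∅ ∪
  ψ.keys.foldr (fun k s => k.vars ∪ s) ∅ ∪ {ψ.x}

/-- Variable renaming on atoms, queries, predicates and key expressions. -/
def Atom.rename (σ : Var → Var) : Atom → Atom
  | .vertex x ls => .vertex (σ x) ls
  | .edge x e y ls => .edge (σ x) (σ e) (σ y) ls
  | .path x p y r => .path (σ x) (σ p) (σ y) r

def Query.rename (σ : Var → Var) (Q : Query) : Query := Q.map (Atom.rename σ)

def Pred.rename (σ : Var → Var) : Pred → Pred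
  | .propEq x a y b => .propEq (σ x) a (σ y) b
  | .propEqC x a c => .propEqC (σ x) a c
  | .ex x a => .ex (σ x) a
  | .idEq x y => .idEq (σ x) (σ y)
  | .propNe x a y b => .propNe (σ x) a (σ y) b
  | .propNeC x a c => .propNeC (σ x) a c
  | .idNe x y => .idNe (σ x) (σ y)

def KeyExpr.rename (σ : Var → Var) : KeyExpr → KeyExpr
  | .var v => .var (σ v)
  | .ref v a => .ref (σ v) a

/-- The existence predicates `ex(ν̄)` associated with a key expression. -/
def exPreds (ks : List KeyExpr) : List Pred :=
  ks.filterMap fun k =>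
    match k with
    | .var _ => none
    | .ref v a => some (.ex v a)

/-- The predicate expressing equality of a key-expression entry with its `σ`-copy. -/
def keyEqPred (σ : Var → Var) : KeyExpr → Pred
  | .var v => .idEq v (σ v)
  | .ref v a => .propEq v a (σ v) a

/-- The renaming that fixes `x` and otherwise applies `σ`. -/
def fixAt (x : Var) (σ : Var → Var) : Var → Var :=
  fun v => if v = x then x else σ v

/-- `G'` is an induced subgraph of `G`. -/
def InducedSubgraph (G' G : PGraph) : Prop :=
  G'.V ⊆ G.V ∧
  G'.E = G.E.filter (fun e => G.src e ∈ G'.V ∧ G.tgt e ∈ G'.V) ∧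
  ∀ o ∈ G'.V ∪ G'.E, G'.src o = G.src o ∧ G'.tgt o = G.tgt o ∧
    G'.lab o = G.lab o ∧ ∀ k, G'.prop o k = G.prop o k

/-- A constraint (given by its satisfaction relation) is expressible by a
finite set of constraints of the class `C`. -/
def Expressible (s : PGraph → Prop) (C : Set (PGraph → Prop)) : Prop :=
  ∃ Ψ : List (PGraph → Prop), (∀ ψ ∈ Ψ, ψ ∈ C) ∧ ∀ G, s G ↔ ∀ ψ ∈ Ψ, ψ G

/-- Expressiveness inclusion of constraint classes. -/
def ClassLE (C₁ C₂ : Set (PGraph → Prop)) : Prop :=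
  ∀ s ∈ C₁, Expressible s C₂

/-- Equal expressive power. -/
def ClassEquiv (C₁ C₂ : Set (PGraph → Prop)) : Prop :=
  ClassLE C₁ C₂ ∧ ClassLE C₂ C₁

/-- Strict expressiveness inclusion. -/
def ClassLT (C₁ C₂ : Set (PGraph → Prop)) : Prop :=
  ClassLE C₁ C₂ ∧ ∃ s ∈ C₂, ¬ Expressible s C₁

/-- The class GFD over the query language `L`. -/
def GFDc (L : QLang) : Set (PGraph → Prop) :=
  {s | ∃ φ : GFD, φ.wf L ∧ s = φ.sat}

/-- The class nGFD over `L`. -/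
def nGFDc (n : ℕ) (L : QLang) : Set (PGraph → Prop) :=
  {s | ∃ φ : GFD, φ.wf L ∧ φ.shared.length ≤ n ∧ s = φ.sat}

/-- The class GGD over `L`. -/
def GGDc (L : QLang) : Set (PGraph → Prop) :=
  {s | ∃ φ : GGD, φ.wf L ∧ s = φ.sat}

/-- The class nGGD over `L`. -/
def nGGDc (n : ℕ) (L : QLang) : Set (PGraph → Prop) :=
  {s | ∃ φ : GGD, φ.wf L ∧ φ.shared.length ≤ n ∧ s = φ.sat}

/-- The class PG-Keys over `L`. -/
def PGKc (L : QLang) : Set (PGraph → Prop) :=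
  {s | ∃ ψ : PGKey, ψ.wf L ∧ s = ψ.sat}

/-- The class mPG-Keys over `L`. -/
def mPGKc (L : QLang) : Set (PGraph → Prop) :=
  {s | ∃ ψ : PGKey, ψ.wf L ∧ ψ.kw = KW.mandatory ∧ s = ψ.sat}


/-- The GFD `φ = ((x)(y), ∅ ⇒ {x.a = y.a})`, with `x = 0`, `y = 1` and `a = 0`. -/
def twoVertexGFD : GFD :=
  ⟨[0, 1], [Atom.vertex 0 [], Atom.vertex 1 []], [], [Pred.propEq 0 0 1 0]⟩

/-! ### Auxiliary machinery for the inexpressibility proof -/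

/-- Constants occurring in a data predicate. -/
def constsP : Pred → Finset Val
  | .propEqC _ _ c => {c}
  | .propNeC _ _ c => {c}
  | _ => ∅

/-- Constants occurring in a GGD. -/
def constsG (φ : GGD) : Finset Val :=
  (φ.Cs ++ φ.Ct).foldr (fun p s => constsP p ∪ s) ∅

lemma constsP_subset_foldr {p : Pred} {l : List Pred} (hp : p ∈ l) :
    constsP p ⊆ l.foldr (fun p s => constsP p ∪ s) ∅ := by
  induction l with
  | nil => simp at hp
  | cons q l ih =>
    rcases List.mem_cons.mp hp with rfl | hp
    · exact Finset.subset_union_left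
    · exact (ih hp).trans Finset.subset_union_right

/-- The common property function of the counterexample graphs. -/
def gprop (B : ℕ) : Obj → Key → Option Val :=
  fun o k => if k = 0 ∧ o ≤ 1 then some (B + o) else none

lemma gprop_eq_some {B o k v : ℕ} :
    gprop B o k = some v ↔ k = 0 ∧ o ≤ 1 ∧ v = B + o := by
  unfold gprop
  by_cases h : k = 0 ∧ o ≤ 1
  · rw [if_pos h]
    simp only [Option.some.injEq]
    constructor
    · rintro rfl; exact ⟨h.1, h.2, rfl⟩
    · rintro ⟨_, _, rfl⟩; rfl
  · rw [if_neg h]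
    constructor
    · intro hv; exact absurd hv (by simp)
    · rintro ⟨hk, ho, _⟩; exact absurd ⟨hk, ho⟩ h

/-- The two-vertex graph, with property values `B` and `B+1`. -/
def Gbig (B : ℕ) : PGraph where
  V := {0, 1}
  E := ∅
  disj := Finset.disjoint_empty_right _
  src := fun _ => 0
  tgt := fun _ => 0
  lab := fun _ => ∅
  prop := gprop B
  src_mem := by intro e he; simp at he
  tgt_mem := by intro e he; simp at he

/-- The single-vertex graph on vertex `t`, with the same property function. -/
def Gone (B t : ℕ) : PGraph where
  V := {t}
  E := ∅
  disj := Finset.disjoint_empty_right _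
  src := fun _ => 0
  tgt := fun _ => 0
  lab := fun _ => ∅
  prop := gprop B
  src_mem := by intro e he; simp at he
  tgt_mem := by intro e he; simp at he

lemma Gbig_V {B : ℕ} : (Gbig B).V = {0, 1} := rfl
lemma Gone_V {B t : ℕ} : (Gone B t).V = {t} := rfl

/-- Retraction of targets onto the single vertex `t`. -/
def squash (t : Obj) : Target → Target
  | .obj _ => .obj t
  | .walk w => .walk ⟨t, w.edges⟩

/-- The underlying vertex of a target. -/
def baseOf : Target → Obj
  | .obj o => o
  | .walk w => w.start

lemma squash_baseOf (τ : Target) : squash (baseOf τ) τ = τ := by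
  cases τ with
  | obj o => rfl
  | walk w => cases w; rfl

lemma walkFrom_empty {G : PGraph} (hE : G.E = ∅) {u : Obj} {es : List Obj}
    (h : G.walkFrom u es) : es = [] ∧ u ∈ G.V := by
  cases es with
  | nil => exact ⟨rfl, h⟩
  | cons e es =>
    obtain ⟨he, -, -⟩ := h
    rw [hE] at he
    simp at he

lemma mem_qvars {x : Var} {Q : Query} : x ∈ qvars Q ↔ ∃ a ∈ Q, x ∈ a.vars := by
  induction Q with
  | nil => simp [qvars]
  | cons a Q ih =>
    simp only [qvars, List.foldr] at ih ⊢
    simp [Finset.mem_union, ih]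

lemma le_foldr_max {l : List ℕ} {a : ℕ} (h : a ∈ l) : a ≤ l.foldr max 0 := by
  induction l with
  | nil => simp at h
  | cons b l ih =>
    rcases List.mem_cons.mp h with rfl | h
    · exact le_max_left _ _
    · exact le_trans (ih h) (le_max_right _ _)

lemma baseOf_mem {B : ℕ} {Q : Query} {hs : Var → Target} {x0 : Var}
    (hx : x0 ∈ qvars Q) (hm : Match (Gbig B) Q hs) : baseOf (hs x0) ≤ 1 := by
  obtain ⟨a, haQ, hav⟩ := mem_qvars.mp hx
  have hsat := hm a haQ
  have memV : ∀ {o : Obj}, o ∈ (Gbig B).V → o ≤ 1 := by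
    intro o ho
    rw [Gbig_V, Finset.mem_insert, Finset.mem_singleton] at ho
    rcases ho with rfl | rfl
    · exact Nat.zero_le 1
    · exact Nat.le_refl 1
  cases a with
  | vertex x ls =>
    obtain ⟨o, hxo, hoV, _⟩ := hsat
    simp [Atom.vars] at hav
    subst hav
    rw [hxo]
    exact memV hoV
  | edge x e y ls =>
    obtain ⟨ox', oe, oy', hp1, hp2, hp3, heE, hrest⟩ := hsat
    simp [Gbig] at heE
  | path x p y r =>
    obtain ⟨ox, w, oy, hxo, hpo, hyo, hst, hwalk, hend, hrest⟩ := hsat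
    obtain ⟨hes, hoxV⟩ := walkFrom_empty rfl hwalk
    have hoy : oy = ox := by
      rw [← hend]
      unfold Walk.endpt
      rw [hes]
      exact hst
    simp [Atom.vars] at hav
    rcases hav with rfl | rfl | rfl
    · rw [hxo]; exact memV hoxV
    · rw [hpo]; show w.start ≤ 1; rw [hst]; exact memV hoxV
    · rw [hyo]; show oy ≤ 1; rw [hoy]; exact memV hoxV

lemma match_squash {B t : ℕ} {Q : Query} {hs : Var → Target} (ht1 : t ≤ 1)
    (hm : Match (Gbig B) Q hs) :
    Match (Gone B t) Q (fun v => squash t (hs v)) := by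
  intro a ha
  have hsat := hm a ha
  cases a with
  | vertex x ls =>
    obtain ⟨o, hxo, hoV, hl⟩ := hsat
    exact ⟨t, by simp only [hxo]; rfl, by simp [Gone],
      fun l hl' => ((Finset.notMem_empty l) (hl l hl')).elim⟩
  | edge x e y ls =>
    obtain ⟨ox', oe, oy', hp1, hp2, hp3, heE, hrest⟩ := hsat
    simp [Gbig] at heE
  | path x p y r =>
    obtain ⟨ox, w, oy, hxo, hpo, hyo, hst, hwalk, hend, word, hword, hfa⟩ := hsat
    obtain ⟨hes, hoxV⟩ := walkFrom_empty rfl hwalk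
    have hword0 : word = [] := by
      rw [hes] at hfa
      cases hfa
      rfl
    refine ⟨t, ⟨t, []⟩, t, ?_, ?_, ?_, rfl, ?_, rfl, [], ?_, List.Forall₂.nil⟩
    · simp only [hxo]; rfl
    · simp only [hpo]; show Target.walk ⟨t, w.edges⟩ = _; rw [hes]
    · simp only [hyo]; rfl
    · show t ∈ (Gone B t).V; simp [Gone]
    · rw [← hword0]; exact hword

lemma propOf_big_some {B : ℕ} {h : Var → Target} {x : Var} {a v : ℕ}
    (hp : propOf (Gbig B) h x a = some v) :
    ∃ o, h x = .obj o ∧ a = 0 ∧ o ≤ 1 ∧ v = B + o := by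
  unfold propOf at hp
  cases hhx : h x with
  | obj o =>
    rw [hhx] at hp
    have := gprop_eq_some.mp hp
    exact ⟨o, rfl, this.1, this.2.1, this.2.2⟩
  | walk w =>
    rw [hhx] at hp
    simp at hp

lemma propOf_one_squash {B t : ℕ} {hs : Var → Target} {x : Var} {o : Obj}
    (ht1 : t ≤ 1) (hxo : hs x = .obj o) :
    propOf (Gone B t) (fun v => squash t (hs v)) x 0 = some (B + t) := by
  unfold propOf
  simp only [hxo]
  show gprop B t 0 = some (B + t)
  exact gprop_eq_some.mpr ⟨rfl, ht1, rfl⟩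

lemma pred_squash {B t : ℕ} {p : Pred} {hs : Var → Target} (ht1 : t ≤ 1)
    (hB : ∀ c ∈ constsP p, c < B) (hq : p.isEq)
    (h : p.sat (Gbig B) hs) :
    p.sat (Gone B t) (fun v => squash t (hs v)) := by
  cases p with
  | propEq x a y b =>
    obtain ⟨v, h1, h2⟩ := h
    obtain ⟨ox, hxo, ha0, hox1, hv1⟩ := propOf_big_some h1
    obtain ⟨oy, hyo, hb0, hoy1, hv2⟩ := propOf_big_some h2
    subst ha0; subst hb0
    exact ⟨B + t, propOf_one_squash ht1 hxo, propOf_one_squash ht1 hyo⟩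
  | propEqC x a c =>
    obtain ⟨o, hxo, ha0, ho1, hv⟩ := propOf_big_some h
    have hcB : c < B := hB c (by simp [constsP])
    exact absurd hv (Nat.ne_of_lt (lt_of_lt_of_le hcB (Nat.le_add_right B o)))
  | ex x a =>
    obtain ⟨v, hv⟩ := Option.isSome_iff_exists.mp h
    obtain ⟨o, hxo, ha0, ho1, hv1⟩ := propOf_big_some hv
    subst ha0
    show (propOf (Gone B t) (fun v => squash t (hs v)) x 0).isSome
    rw [propOf_one_squash ht1 hxo]
    rfl
  | idEq x y =>
    show squash t (hs x) = squash t (hs y)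
    rw [h]
  | propNe x a y b => exact hq.elim
  | propNeC x a c => exact hq.elim
  | idNe x y => exact hq.elim

lemma match_back {B t : ℕ} {Q : Query} {ht : Var → Target} (ht1 : t ≤ 1)
    (hm : Match (Gone B t) Q ht) : Match (Gbig B) Q ht := by
  have memV : ∀ {o : Obj}, o ∈ (Gone B t).V → o ∈ (Gbig B).V := by
    intro o ho
    rw [Gone_V, Finset.mem_singleton] at ho
    subst ho
    rw [Gbig_V, Finset.mem_insert, Finset.mem_singleton]
    exact Nat.le_one_iff_eq_zero_or_eq_one.mp ht1
  intro a ha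
  have hsat := hm a ha
  cases a with
  | vertex x ls =>
    obtain ⟨o, hxo, hoV, hl⟩ := hsat
    exact ⟨o, hxo, memV hoV, hl⟩
  | edge x e y ls =>
    obtain ⟨ox', oe, oy', hp1, hp2, hp3, heE, hrest⟩ := hsat
    simp [Gone] at heE
  | path x p y r =>
    obtain ⟨ox, w, oy, hxo, hpo, hyo, hst, hwalk, hend, word, hword, hfa⟩ := hsat
    obtain ⟨hes, hoxV⟩ := walkFrom_empty rfl hwalk
    refine ⟨ox, w, oy, hxo, hpo, hyo, hst, ?_, hend, word, hword, hfa⟩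
    rw [hes]
    exact memV hoxV

/-- The key transfer lemma: a 1GGD over CRPQ[=] whose constants are below `B` and
which holds on both single-vertex graphs also holds on the two-vertex graph. -/
lemma key_lemma (φ : GGD) (B : ℕ) (hwf : φ.wf CRPQeq) (hlen : φ.shared.length ≤ 1)
    (hc : ∀ c ∈ constsG φ, c < B)
    (h0 : φ.sat (Gone B 0)) (h1 : φ.sat (Gone B 1)) : φ.sat (Gbig B) := by
  obtain ⟨hQs, hQt, hCs, hCt, hsh, -, -, -⟩ := hwf
  intro hs hmatch hcs
  have hshape : φ.shared = [] ∨ ∃ x0, φ.shared = [x0] := by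
    rcases hsp : φ.shared with _ | ⟨x0, rest⟩
    · exact Or.inl rfl
    · rw [hsp, List.length_cons] at hlen
      have hrest : rest = [] := List.length_eq_zero_iff.mp (Nat.lt_one_iff.mp hlen)
      exact Or.inr ⟨x0, by rw [hrest]⟩
  obtain ⟨t, ht1, htfix⟩ : ∃ t, t ≤ 1 ∧ ∀ v ∈ φ.shared, squash t (hs v) = hs v := by
    rcases hshape with hx | ⟨x0, hx⟩
    · exact ⟨0, Nat.zero_le 1, by simp [hx]⟩
    · have hx0 : x0 ∈ qvars φ.Qs := hsh (by rw [hx]; simp)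
      refine ⟨baseOf (hs x0), baseOf_mem hx0 hmatch, ?_⟩
      intro v hv
      rw [hx] at hv
      simp at hv
      subst hv
      exact squash_baseOf _
  have hmatch' : Match (Gone B t) φ.Qs (fun v => squash t (hs v)) :=
    match_squash ht1 hmatch
  have hcs' : satC (Gone B t) (fun v => squash t (hs v)) φ.Cs := by
    intro p hp
    refine pred_squash ht1 ?_ (hCs p hp) (hcs p hp)
    intro c hc'
    exact hc c (constsP_subset_foldr (by simp [hp]) hc')
  have hφt : φ.sat (Gone B t) := by
    rcases Nat.le_one_iff_eq_zero_or_eq_one.mp ht1 with rfl | rfl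
    · exact h0
    · exact h1
  obtain ⟨ht, hmt, hagree, hctt⟩ := hφt _ hmatch' hcs'
  refine ⟨ht, match_back ht1 hmt, ?_, ?_⟩
  · intro v hv
    rw [hagree v hv]
    exact htfix v hv
  · exact hctt

lemma twoVertexGFD_wf : twoVertexGFD.wf CRPQeq := by
  refine ⟨?_, ?_, ?_, ?_, ?_, ?_⟩
  · intro a ha hp
    simp [twoVertexGFD] at ha
    rcases ha with rfl | rfl <;> exact hp.elim
  · intro p hp
    simp [twoVertexGFD] at hp
  · intro p hp
    simp [twoVertexGFD] at hp
    subst hp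
    trivial
  · intro v hv
    simp [twoVertexGFD] at hv
    simp [twoVertexGFD, qvars, Atom.vars]
    tauto
  · intro p hp
    simp [twoVertexGFD] at hp
    subst hp
    intro v hv
    simp [Pred.vars] at hv
    simp [twoVertexGFD]
    tauto
  · intro p hp
    simp [twoVertexGFD] at hp

lemma gone_sat_two {B t : ℕ} (ht1 : t ≤ 1) : twoVertexGFD.sat (Gone B t) := by
  intro h hm _
  intro p hp
  simp [twoVertexGFD] at hp
  subst hp
  have h0 := hm (Atom.vertex 0 []) (by simp [twoVertexGFD])
  have h1 := hm (Atom.vertex 1 []) (by simp [twoVertexGFD])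
  obtain ⟨o0, hx0, hV0, -⟩ := h0
  obtain ⟨o1, hx1, hV1, -⟩ := h1
  have ho0 : o0 = t := by rw [Gone_V, Finset.mem_singleton] at hV0; exact hV0
  have ho1 : o1 = t := by rw [Gone_V, Finset.mem_singleton] at hV1; exact hV1
  rw [ho0] at hx0
  rw [ho1] at hx1
  refine ⟨B + t, ?_, ?_⟩ <;>
    · unfold propOf
      simp only [hx0, hx1]
      show gprop B t 0 = some (B + t)
      exact gprop_eq_some.mpr ⟨rfl, ht1, rfl⟩

lemma not_expressible : ¬ Expressible twoVertexGFD.sat (nGGDc 1 CRPQeq) := by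
  classical
  rintro ⟨Ψ, hΨ, hiff⟩
  let F : {ψ // ψ ∈ Ψ} → GGD := fun x =>
    (show ∃ φ : GGD, φ.wf CRPQeq ∧ φ.shared.length ≤ 1 ∧ x.1 = φ.sat from hΨ x.1 x.2).choose
  have hF : ∀ x : {ψ // ψ ∈ Ψ},
      (F x).wf CRPQeq ∧ (F x).shared.length ≤ 1 ∧ x.1 = (F x).sat := fun x =>
    (show ∃ φ : GGD, φ.wf CRPQeq ∧ φ.shared.length ≤ 1 ∧ x.1 = φ.sat from hΨ x.1 x.2).choose_spec
  obtain ⟨B, hB⟩ : ∃ B : ℕ, ∀ x : {ψ // ψ ∈ Ψ}, ∀ c ∈ constsG (F x), c < B := by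
    refine ⟨(Ψ.attach.map fun x => (constsG (F x)).sup id).foldr max 0 + 1, ?_⟩
    intro x c hc
    have h1 : c ≤ (constsG (F x)).sup id := Finset.le_sup (f := id) hc
    have h2 : (constsG (F x)).sup id ≤
        (Ψ.attach.map fun x => (constsG (F x)).sup id).foldr max 0 :=
      le_foldr_max (List.mem_map.mpr ⟨x, List.mem_attach _ _, rfl⟩)
    exact lt_of_le_of_lt (h1.trans h2) (Nat.lt_succ_self _)
  -- every ψ ∈ Ψ holds on the two-vertex graph
  have hbig : twoVertexGFD.sat (Gbig B) := by
    refine (hiff (Gbig B)).mpr ?_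
    intro ψ hψ
    have hF' := hF ⟨ψ, hψ⟩
    have hψeq : ψ = (F ⟨ψ, hψ⟩).sat := hF'.2.2
    rw [hψeq]
    refine key_lemma _ B hF'.1 hF'.2.1 (hB ⟨ψ, hψ⟩) ?_ ?_
    · have := (hiff (Gone B 0)).mp (gone_sat_two (by omega)) ψ hψ
      rwa [hψeq] at this
    · have := (hiff (Gone B 1)).mp (gone_sat_two (by omega)) ψ hψ
      rwa [hψeq] at this
  -- but the GFD fails on the two-vertex graph
  have hmatch : Match (Gbig B) twoVertexGFD.Q
      (fun v => if v = 0 then .obj 0 else .obj 1) := by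
    intro a ha
    simp [twoVertexGFD] at ha
    rcases ha with rfl | rfl
    · exact ⟨0, by simp, by simp [Gbig], by simp⟩
    · exact ⟨1, by simp, by simp [Gbig], by simp⟩
  have hcs : satC (Gbig B) (fun v => if v = 0 then .obj 0 else .obj 1) twoVertexGFD.Cs := by
    intro p hp
    simp [twoVertexGFD] at hp
  have hct := hbig _ hmatch hcs (Pred.propEq 0 0 1 0) (by simp [twoVertexGFD])
  obtain ⟨v, hv0, hv1⟩ := hct
  obtain ⟨o0, ho0, hz0, hl0, hval0⟩ := propOf_big_some hv0
  obtain ⟨o1, ho1, hz1, hl1, hval1⟩ := propOf_big_some hv1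
  have e0 : Target.obj (0 : Obj) = Target.obj o0 := ho0
  have e1 : Target.obj (1 : Obj) = Target.obj o1 := ho1
  injection e0 with e0'
  injection e1 with e1'
  rw [← e0'] at hval0
  rw [← e1'] at hval1
  have hBB : B + 0 = B + 1 := by rw [← hval0, ← hval1]
  simp at hBB

/-- over CRPQ[=], some GFD-expressible constraints are not expressible
in 1GGD; in particular `((x)(y), ∅ ⇒ {x.a = y.a})`. -/
theorem gfd_not_in_1ggd_crpq_eq :
    twoVertexGFD.wf CRPQeq ∧
    ¬ Expressible twoVertexGFD.sat (nGGDc 1 CRPQeq) ∧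
    ∃ s ∈ GFDc CRPQeq, ¬ Expressible s (nGGDc 1 CRPQeq) := by
  exact ⟨twoVertexGFD_wf, not_expressible,
    twoVertexGFD.sat, ⟨twoVertexGFD, twoVertexGFD_wf, rfl⟩, not_expressible⟩

end PGC
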